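/- arXiv:quant-ph/0402170 — 2 statements merged into one kernel-verified Lean document; each statement's English description precedes it below -/
import Mathlib

section
/- Let D ≥ 1, and for each pair of bits b, g ∈ F₂ let ρ_b^g be a density matrix on ℂ^D and P̃_b^g a D×D complex matrix, satisfying for all a, b ∈ F₂: P̃_b^0 + P̃_b^1 = 1, P̃_b^a ρ_{b̄}^0 P̃_b^a = P̃_b^a ρ_{b̄}^1 P̃_b^a, and P̃_b^a ρ_{b̄}^0 P̃_b^{ā} = − P̃_b^a ρ_{b̄}^1 P̃_b^{ā} (where x̄ = 1 ⊕ x). Fix b ∈ F₂ⁿ, let C₀ ⊆ F₂ⁿ be a linear subspace and θ ∈ F₂ⁿ, and for a subset A ⊆ F₂ⁿ write ρ_A = |A|⁻¹ Σ_{g ∈ A} ⊗_{k=1}^n ρ_{b̄[k]}^{g[k]}. Then for all k, l ∈ F₂ⁿ: (⊗_{i=1}^n P̃_{b[i]}^{k[i]}) · ρ_{θ ⊕ C₀} · (⊗_{i=1}^n P̃_{b[i]}^{l[i]}) = (−1)^{θ·(k ⊕ l)} · (⊗_{i=1}^n P̃_{b[i]}^{k[i]}) · ρ_{C₀} · (⊗_{i=1}^n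 P̃_{b[i]}^{l[i]}), where θ ⊕ C₀ = {θ ⊕ g : g ∈ C₀} and θ·w denotes the standard F₂ inner product interpreted as an integer modulo 2. -/
/-!
On a single site the hypotheses say that replacing `ρ_{b̄}^g` by `ρ_{b̄}^{1+g}` is invisible in
the diagonal blocks `P̃_b^a ρ P̃_b^a` and flips the sign of the off-diagonal ones, so
`P̃_b^k ρ_{b̄}^{θ+g} P̃_b^l = (-1)^{θ(k+l)} P̃_b^k ρ_{b̄}^g P̃_b^l`. Tensoring over the sites turns
these signs into `(-1)^{θ·(k+l)}`, independent of `g`, and translation by `θ` is a bijection from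
`C₀` onto `θ + C₀`, so the two averages differ exactly by that sign.
-/
open Matrix
open scoped ComplexOrder Classical

/-- The `n`-fold Kronecker/tensor product `⊗_{i=1}^n M_i`, as a matrix acting on
`(ℂ^D)^{⊗n}` (indexed by functions `Fin n → Fin D`). -/
noncomputable def tpow {D n : ℕ} (M : Fin n → Matrix (Fin D) (Fin D) ℂ) :
    Matrix (Fin n → Fin D) (Fin n → Fin D) ℂ :=
  Matrix.of fun x y => ∏ i, M i (x i) (y i)

/-- `ρ_A = |A|⁻¹ Σ_{g ∈ A} ⊗_{k=1}^n ρ_{b̄[k]}^{g[k]}`. -/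
noncomputable def rhoOf {D n : ℕ} (ρ : ZMod 2 → ZMod 2 → Matrix (Fin D) (Fin D) ℂ)
    (b : Fin n → ZMod 2) (A : Finset (Fin n → ZMod 2)) :
    Matrix (Fin n → Fin D) (Fin n → Fin D) ℂ :=
  ((A.card : ℂ))⁻¹ • ∑ g ∈ A, tpow (fun k => ρ (b k + 1) (g k))

lemma neg_one_pow_val_add (x y : ZMod 2) :
    (-1 : ℂ) ^ (x + y).val = (-1) ^ x.val * (-1) ^ y.val := by
  rw [ZMod.val_add, ← neg_one_pow_eq_pow_mod_two, pow_add]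

lemma neg_one_pow_val_sum {ι : Type*} (s : Finset ι) (f : ι → ZMod 2) :
    (-1 : ℂ) ^ (∑ i ∈ s, f i).val = ∏ i ∈ s, (-1 : ℂ) ^ (f i).val := by
  induction s using Finset.induction with
  | empty => simp
  | insert a s has ih =>
    rw [Finset.sum_insert has, Finset.prod_insert has, neg_one_pow_val_add, ih]

lemma neg_one_pow_dotProduct_val {n : ℕ} (v w : Fin n → ZMod 2) :
    (-1 : ℂ) ^ (v ⬝ᵥ w).val = ∏ i, (-1 : ℂ) ^ (v i * w i).val :=
  neg_one_pow_val_sum _ _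

section tpow

variable {D n : ℕ}

lemma tpow_mul (M N : Fin n → Matrix (Fin D) (Fin D) ℂ) :
    tpow M * tpow N = tpow (fun i => M i * N i) := by
  ext x y
  simp only [tpow, Matrix.mul_apply, Matrix.of_apply]
  rw [Finset.prod_univ_sum, Fintype.piFinset_univ]
  exact Finset.sum_congr rfl fun z _ => (Finset.prod_mul_distrib).symm

lemma tpow_smul (c : Fin n → ℂ) (M : Fin n → Matrix (Fin D) (Fin D) ℂ) :
    tpow (fun i => c i • M i) = (∏ i, c i) • tpow M := by
  ext x y
  simp only [tpow, Matrix.of_apply, Matrix.smul_apply, smul_eq_mul, Finset.prod_mul_distrib]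

end tpow

section sandwich

variable {D : ℕ} {ρ Pt : ZMod 2 → ZMod 2 → Matrix (Fin D) (Fin D) ℂ}
    (hPt2 : ∀ a b : ZMod 2,
      Pt b a * ρ (b + 1) 0 * Pt b a = Pt b a * ρ (b + 1) 1 * Pt b a)
    (hPt3 : ∀ a b : ZMod 2,
      Pt b a * ρ (b + 1) 0 * Pt b (a + 1) = -(Pt b a * ρ (b + 1) 1 * Pt b (a + 1)))
include hPt2 hPt3

lemma sandwich_one (b k l : ZMod 2) :
    Pt b k * ρ (b + 1) 1 * Pt b l
      = (-1 : ℂ) ^ (k + l).val • (Pt b k * ρ (b + 1) 0 * Pt b l) := by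
  obtain rfl | rfl : l = k ∨ l = k + 1 := by decide +revert
  · rw [CharTwo.add_self_eq_zero, ZMod.val_zero, pow_zero, one_smul, hPt2]
  · rw [← add_assoc, CharTwo.add_self_eq_zero, zero_add, ZMod.val_one, pow_one, neg_one_smul,
      hPt3, neg_neg]

lemma sandwich_add (b θ k l g : ZMod 2) :
    Pt b k * ρ (b + 1) (θ + g) * Pt b l
      = (-1 : ℂ) ^ (θ * (k + l)).val • (Pt b k * ρ (b + 1) g * Pt b l) := by
  obtain rfl | rfl : θ = 0 ∨ θ = 1 := by decide +revert
  · rw [zero_add, zero_mul, ZMod.val_zero, pow_zero, one_smul]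
  rw [one_mul]
  obtain rfl | rfl : g = 0 ∨ g = 1 := by decide +revert
  · rw [add_zero, sandwich_one hPt2 hPt3]
  · rw [CharTwo.add_self_eq_zero, sandwich_one hPt2 hPt3, smul_smul, ← mul_pow, neg_one_mul,
      neg_neg, one_pow, one_smul]

lemma tpow_sandwich_add {n : ℕ} (b θ k l g : Fin n → ZMod 2) :
    tpow (fun i => Pt (b i) (k i)) * tpow (fun i => ρ (b i + 1) ((θ + g) i)) *
        tpow (fun i => Pt (b i) (l i))
      = (-1 : ℂ) ^ (θ ⬝ᵥ (k + l)).val •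
        (tpow (fun i => Pt (b i) (k i)) * tpow (fun i => ρ (b i + 1) (g i)) *
          tpow (fun i => Pt (b i) (l i))) := by
  simp only [tpow_mul, Pi.add_apply, sandwich_add hPt2 hPt3, tpow_smul,
    neg_one_pow_dotProduct_val]

end sandwich

lemma mul_rhoOf_mul {D n : ℕ} (ρ : ZMod 2 → ZMod 2 → Matrix (Fin D) (Fin D) ℂ)
    (b : Fin n → ZMod 2) (A : Finset (Fin n → ZMod 2))
    (X Y : Matrix (Fin n → Fin D) (Fin n → Fin D) ℂ) :
    X * rhoOf ρ b A * Y
      = (A.card : ℂ)⁻¹ • ∑ g ∈ A, X * tpow (fun i => ρ (b i + 1) (g i)) * Y := by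
  simp only [rhoOf, Matrix.mul_smul, Matrix.smul_mul, Finset.mul_sum, Finset.sum_mul]

theorem stmt10_general (D n : ℕ)
    (ρ Pt : ZMod 2 → ZMod 2 → Matrix (Fin D) (Fin D) ℂ)
    (hPt2 : ∀ a b : ZMod 2,
      Pt b a * ρ (b + 1) 0 * Pt b a = Pt b a * ρ (b + 1) 1 * Pt b a)
    (hPt3 : ∀ a b : ZMod 2,
      Pt b a * ρ (b + 1) 0 * Pt b (a + 1) = -(Pt b a * ρ (b + 1) 1 * Pt b (a + 1)))
    (b : Fin n → ZMod 2)
    (C0 : Submodule (ZMod 2) (Fin n → ZMod 2)) (θ : Fin n → ZMod 2)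
    (k l : Fin n → ZMod 2) :
    tpow (fun i => Pt (b i) (k i)) *
        rhoOf ρ b ((Finset.univ.filter (fun g => g ∈ C0)).image (fun g => θ + g)) *
        tpow (fun i => Pt (b i) (l i)) =
      ((-1 : ℂ)) ^ ((θ ⬝ᵥ (k + l)).val) •
        (tpow (fun i => Pt (b i) (k i)) *
          rhoOf ρ b (Finset.univ.filter (fun g => g ∈ C0)) *
          tpow (fun i => Pt (b i) (l i))) := by
  rw [mul_rhoOf_mul, mul_rhoOf_mul, Finset.card_image_of_injective _ (add_right_injective θ),
    Finset.sum_image fun _ _ _ _ h => add_left_cancel h]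
  simp only [tpow_sandwich_add hPt2 hPt3, ← Finset.smul_sum]
  rw [smul_comm]

/-- coset shift identity:
`P̃_b^k ρ_{θ ⊕ C₀} P̃_b^l = (−1)^{θ·(k⊕l)} P̃_b^k ρ_{C₀} P̃_b^l`. -/
theorem stmt10 (D n : ℕ) (hD : 1 ≤ D)
    (ρ Pt : ZMod 2 → ZMod 2 → Matrix (Fin D) (Fin D) ℂ)
    (hρ : ∀ b g, (ρ b g).PosSemidef ∧ (ρ b g).trace = 1)
    (hPt1 : ∀ b : ZMod 2, Pt b 0 + Pt b 1 = 1)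
    (hPt2 : ∀ a b : ZMod 2,
      Pt b a * ρ (b + 1) 0 * Pt b a = Pt b a * ρ (b + 1) 1 * Pt b a)
    (hPt3 : ∀ a b : ZMod 2,
      Pt b a * ρ (b + 1) 0 * Pt b (a + 1) = -(Pt b a * ρ (b + 1) 1 * Pt b (a + 1)))
    (b : Fin n → ZMod 2)
    (C0 : Submodule (ZMod 2) (Fin n → ZMod 2)) (θ : Fin n → ZMod 2)
    (k l : Fin n → ZMod 2) :
    tpow (fun i => Pt (b i) (k i)) *
        rhoOf ρ b ((Finset.univ.filter (fun g => g ∈ C0)).image (fun g => θ + g)) *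
        tpow (fun i => Pt (b i) (l i)) =
      ((-1 : ℂ)) ^ ((θ ⬝ᵥ (k + l)).val) •
        (tpow (fun i => Pt (b i) (k i)) *
          rhoOf ρ b (Finset.univ.filter (fun g => g ∈ C0)) *
          tpow (fun i => Pt (b i) (l i))) :=
  stmt10_general D n ρ Pt hPt2 hPt3 b C0 θ k l
end

section
/- Let p, r, t be real numbers with 0 < r − t, r ≤ p < 1 and t > 0, let n_r and n_p be positive integers, and set n = n_r + n_p. Then Σ over all pairs of integers (i_r, i_p) with 0 ≤ i_r ≤ n_r, 0 ≤ i_p ≤ n_p and i_r + i_p ≤ (r − t)·n of C(n_p, i_p)·C(n_r, i_r)·p^{i_p}·(1−p)^{n_p−i_p}·r^{i_r}·(1−r)^{n_r−i_r} is at most e^{−2t²n}. -/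
/-!
Chernoff's method. For `u > 0`, the indicator of `{i_r + i_p ≤ a}` is at most
`exp (u (a - i_r - i_p))`, so the sum is bounded by `exp (u a)` times the moment generating
functions of the two binomial laws at `-u`. Each binomial mgf is the `n`-th power of a Bernoulli
mgf, which Hoeffding's lemma bounds by `exp (-q u + u² / 8)`. Since `r ≤ p`, everything is
dominated by the case `p = r`, and `u = 4t` optimises the resulting exponent to `-2t²n`.
-/

open Finset MeasureTheory ProbabilityTheory

lemma hoeffding_lemma_bernoulli {q : ℝ} (hq0 : 0 ≤ q) (hq1 : q ≤ 1) (u : ℝ) :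
    q * Real.exp u + (1 - q) ≤ Real.exp (q * u + u ^ 2 / 8) := by
  let μ : Measure ℝ := Ber((1 : ℝ), 0, ⟨q, hq0, hq1⟩)
  have hbound : ∀ᵐ x ∂μ, x ∈ Set.Icc (0 : ℝ) 1 :=
    ae_iff.2 <| bernoulliMeasure_apply_of_notMem_of_notMem _ measurableSet_Icc.compl
      (by simp) (by simp)
  have hmgf := (hasSubgaussianMGF_of_mem_Icc aemeasurable_id hbound).mgf_le u
  norm_num [mgf, μ, integral_bernoulliMeasure] at hmgf
  calc q * Real.exp u + (1 - q)
      = Real.exp (q * u) * (q * Real.exp (u * (1 - q)) + (1 - q) * Real.exp (-(u * q))) := by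
        rw [mul_add, mul_left_comm, ← Real.exp_add, mul_left_comm, ← Real.exp_add]
        ring_nf
        rw [Real.exp_zero]
        ring
    _ ≤ Real.exp (q * u) * Real.exp (1 / 4 * u ^ 2 / 2) := by gcongr
    _ = Real.exp (q * u + u ^ 2 / 8) := by rw [← Real.exp_add]; ring_nf

lemma sum_binomial_mul_exp_le {q : ℝ} (hq0 : 0 ≤ q) (hq1 : q ≤ 1) (n : ℕ) (u : ℝ) :
    ∑ k ∈ range (n + 1), (n.choose k : ℝ) * q ^ k * (1 - q) ^ (n - k) * Real.exp (u * k)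
      ≤ Real.exp (n * (q * u + u ^ 2 / 8)) := by
  calc ∑ k ∈ range (n + 1), (n.choose k : ℝ) * q ^ k * (1 - q) ^ (n - k) * Real.exp (u * k)
      = (q * Real.exp u + (1 - q)) ^ n := by
        rw [add_pow]
        refine sum_congr rfl fun k _ => ?_
        rw [mul_pow, ← Real.exp_nat_mul]
        ring_nf
    _ ≤ Real.exp (q * u + u ^ 2 / 8) ^ n :=
        pow_le_pow_left₀ (add_nonneg (by positivity) (sub_nonneg.2 hq1))
          (hoeffding_lemma_bernoulli hq0 hq1 u) n
    _ = Real.exp (n * (q * u + u ^ 2 / 8)) := by rw [← Real.exp_nat_mul]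

lemma sum_filter_le_sum_mul_exp {ι : Type*} (s : Finset ι) (w f : ι → ℝ)
    (hw : ∀ x ∈ s, 0 ≤ w x) {a u : ℝ} (hu : 0 ≤ u) [DecidablePred fun x => f x ≤ a] :
    ∑ x ∈ s with f x ≤ a, w x ≤ ∑ x ∈ s, w x * Real.exp (u * (a - f x)) := by
  calc ∑ x ∈ s with f x ≤ a, w x
      ≤ ∑ x ∈ s with f x ≤ a, w x * Real.exp (u * (a - f x)) := by
        refine sum_le_sum fun x hx => ?_
        obtain ⟨hxs, hxa⟩ := mem_filter.1 hx
        have : 1 ≤ Real.exp (u * (a - f x)) :=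
          Real.one_le_exp (mul_nonneg hu (sub_nonneg.2 hxa))
        nlinarith [hw x hxs]
    _ ≤ ∑ x ∈ s, w x * Real.exp (u * (a - f x)) :=
        sum_le_sum_of_subset_of_nonneg (filter_subset _ _) fun x hx _ =>
          mul_nonneg (hw x hx) (Real.exp_pos _).le

theorem stmt15_general (p r t : ℝ) (hrt : 0 < r - t) (hrp : r ≤ p) (hp1 : p < 1) (ht : 0 < t)
    (nr np : ℕ) :
    ∑ x ∈ (Finset.range (nr + 1) ×ˢ Finset.range (np + 1)).filter
        (fun x => (x.1 : ℝ) + (x.2 : ℝ) ≤ (r - t) * ((nr : ℝ) + np)),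
      (np.choose x.2 : ℝ) * (nr.choose x.1 : ℝ) *
        p ^ x.2 * (1 - p) ^ (np - x.2) * r ^ x.1 * (1 - r) ^ (nr - x.1)
    ≤ Real.exp (-2 * t ^ 2 * ((nr : ℝ) + np)) := by
  have hr0 : 0 ≤ r := by linarith
  have hp0 : 0 ≤ p := by linarith
  set a := (r - t) * ((nr : ℝ) + np)
  set binom : ℝ → ℕ → ℕ → ℝ := fun q n k => (n.choose k : ℝ) * q ^ k * (1 - q) ^ (n - k)
  refine (sum_filter_le_sum_mul_exp (u := 4 * t) _ _ (fun x : ℕ × ℕ => (x.1 : ℝ) + x.2)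
    (fun x _ => ?_) (by positivity)).trans ?_
  · have : 0 ≤ 1 - p := by linarith
    have : 0 ≤ 1 - r := by linarith
    positivity
  calc _ = Real.exp (4 * t * a) *
          ((∑ k ∈ range (nr + 1), binom r nr k * Real.exp (-(4 * t) * k)) *
            ∑ k ∈ range (np + 1), binom p np k * Real.exp (-(4 * t) * k)) := by
        rw [sum_mul_sum, mul_sum, sum_product]
        refine sum_congr rfl fun i _ => ?_
        rw [mul_sum]
        refine sum_congr rfl fun j _ => ?_
        rw [show 4 * t * (a - (i + j)) = 4 * t * a + -(4 * t) * i + -(4 * t) * j by ring,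
          Real.exp_add, Real.exp_add]
        ring
    _ ≤ Real.exp (4 * t * a) * (Real.exp (nr * (r * -(4 * t) + (-(4 * t)) ^ 2 / 8)) *
          Real.exp (np * (p * -(4 * t) + (-(4 * t)) ^ 2 / 8))) := by
        gcongr
        · exact sum_binomial_mul_exp_le hr0 (by linarith) nr _
        · exact sum_binomial_mul_exp_le hp0 hp1.le np _
    _ ≤ Real.exp (-2 * t ^ 2 * ((nr : ℝ) + np)) := by
        rw [← Real.exp_add, ← Real.exp_add, Real.exp_le_exp]
        nlinarith [mul_nonneg (mul_nonneg ht.le (Nat.cast_nonneg np)) (sub_nonneg.2 hrp)]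

/-- lower tail bound for a sum of two binomial distributions.
For `0 < r − t`, `r ≤ p < 1`, `t > 0` and `n = n_r + n_p`,
`Σ_{i_r + i_p ≤ (r−t)n} C(n_p,i_p) C(n_r,i_r) p^{i_p}(1−p)^{n_p−i_p} r^{i_r}(1−r)^{n_r−i_r}
  ≤ e^{−2t²n}`. -/
theorem stmt15 (p r t : ℝ) (hrt : 0 < r - t) (hrp : r ≤ p) (hp1 : p < 1) (ht : 0 < t)
    (nr np : ℕ) (hnr : 0 < nr) (hnp : 0 < np) :
    ∑ x ∈ (Finset.range (nr + 1) ×ˢ Finset.range (np + 1)).filter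
        (fun x => (x.1 : ℝ) + (x.2 : ℝ) ≤ (r - t) * ((nr : ℝ) + np)),
      (np.choose x.2 : ℝ) * (nr.choose x.1 : ℝ) *
        p ^ x.2 * (1 - p) ^ (np - x.2) * r ^ x.1 * (1 - r) ^ (nr - x.1)
    ≤ Real.exp (-2 * t ^ 2 * ((nr : ℝ) + np)) :=
  stmt15_general p r t hrt hrp hp1 ht nr np
end
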